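/- Let σ be a permutation of {1,...,n} and for each i let (x i, y i) ∈ ℝ² with x i, y i ≥ 0. Consider the polygonal path from the origin through the partial-sum points P_k = (Σ_{j≤k} x (σ j), Σ_{j≤k} y (σ j)). The area under this path (sum over k of trapezoid areas x (σ k) · (Σ_{j<k} y (σ j) + y (σ k)/2)) is maximized over permutations σ when the steps are sorted in decreasing order of slope, i.e., when σ orders the indices so that y (σ 1)/x (σ 1) ≥ y (σ 2)/x (σ 2) ≥ ... (with steps having x i = 0 placed first). Equivalently, for any σ, the sorted ordering achieves area greater than or equal to that of σ. -/
import Mathlib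


open Finset

private def Ltsum {n : ℕ} (g : Fin n → Fin n → ℝ) : ℝ :=
  ∑ p : Fin n × Fin n, if p.1 < p.2 then g p.1 p.2 else 0

private lemma ltsum_add_flip {n : ℕ} (g : Fin n → Fin n → ℝ) :
    Ltsum g + Ltsum (fun a b => g b a)
      = ∑ p : Fin n × Fin n, if p.1 ≠ p.2 then g p.1 p.2 else 0 := by
  have h2 : Ltsum (fun a b => g b a)
      = ∑ p : Fin n × Fin n, if p.2 < p.1 then g p.1 p.2 else 0 := by
    unfold Ltsum
    exact Fintype.sum_equiv (Equiv.prodComm _ _) _ _ (fun p => rfl)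
  rw [h2, Ltsum, ← Finset.sum_add_distrib]
  refine Finset.sum_congr rfl fun p _ => ?_
  rcases lt_trichotomy p.1 p.2 with h | h | h
  · simp [h, not_lt_of_gt h, h.ne]
  · simp [h]
  · simp [h, not_lt_of_gt h, h.ne']

private lemma ltsum_max_const {n : ℕ} (x y : Fin n → ℝ) (σ : Equiv.Perm (Fin n)) :
    Ltsum (fun a b => max (y (σ a) * x (σ b)) (y (σ b) * x (σ a)))
      = Ltsum (fun a b => max (y a * x b) (y b * x a)) := by
  have hsymm : ∀ (τ : Equiv.Perm (Fin n)),
      Ltsum (fun a b => max (y (τ a) * x (τ b)) (y (τ b) * x (τ a))) * 2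
        = ∑ p : Fin n × Fin n,
            if p.1 ≠ p.2 then max (y (τ p.1) * x (τ p.2)) (y (τ p.2) * x (τ p.1)) else 0 := by
    intro τ
    rw [mul_two]
    have := ltsum_add_flip (fun a b => max (y (τ a) * x (τ b)) (y (τ b) * x (τ a)))
    simpa [max_comm] using this
  have hconst : (∑ p : Fin n × Fin n,
      if p.1 ≠ p.2 then max (y (σ p.1) * x (σ p.2)) (y (σ p.2) * x (σ p.1)) else 0)
      = ∑ p : Fin n × Fin n, if p.1 ≠ p.2 then max (y p.1 * x p.2) (y p.2 * x p.1) else 0 := by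
    refine Fintype.sum_equiv (Equiv.prodCongr σ σ) _ _ (fun p => ?_)
    simp [Equiv.prodCongr, EmbeddingLike.apply_eq_iff_eq]
  have h1 := hsymm σ
  have h2 := hsymm 1
  simp only [Equiv.Perm.one_apply] at h2
  nlinarith [h1, h2, hconst]

theorem sorted_slope_order_maximizes_area (n : ℕ) (x y : Fin n → ℝ)
    (hx : ∀ i, 0 ≤ x i) (hy : ∀ i, 0 ≤ y i)
    (σ₀ : Equiv.Perm (Fin n))
    (hsort : ∀ i j : Fin n, i ≤ j → y (σ₀ j) * x (σ₀ i) ≤ y (σ₀ i) * x (σ₀ j)) :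
    ∀ σ : Equiv.Perm (Fin n),
      (∑ k : Fin n, x (σ k) *
          ((∑ j ∈ Finset.univ.filter (fun j => j < k), y (σ j)) + y (σ k) / 2)) ≤
      (∑ k : Fin n, x (σ₀ k) *
          ((∑ j ∈ Finset.univ.filter (fun j => j < k), y (σ₀ j)) + y (σ₀ k) / 2)) := by
  intro σ
  -- decompose each area as S τ + (∑ i, x i * y i)/2
  have decomp : ∀ τ : Equiv.Perm (Fin n),
      (∑ k : Fin n, x (τ k) *
          ((∑ j ∈ Finset.univ.filter (fun j => j < k), y (τ j)) + y (τ k) / 2))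
      = Ltsum (fun j k => y (τ j) * x (τ k)) + (∑ i : Fin n, x i * y i) / 2 := by
    intro τ
    have hdiag : (∑ k : Fin n, x (τ k) * (y (τ k) / 2)) = (∑ i : Fin n, x i * y i) / 2 := by
      rw [← Equiv.sum_comp τ (fun i => x i * y i), Finset.sum_div]
      exact Finset.sum_congr rfl fun k _ => by ring
    have hoff : (∑ k : Fin n, x (τ k) * (∑ j ∈ Finset.univ.filter (fun j => j < k), y (τ j)))
        = Ltsum (fun j k => y (τ j) * x (τ k)) := by
      unfold Ltsum
      rw [Fintype.sum_prod_type, Finset.sum_comm]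
      refine Finset.sum_congr rfl fun k _ => ?_
      rw [Finset.mul_sum, Finset.sum_filter]
      refine Finset.sum_congr rfl fun j _ => ?_
      by_cases h : j < k <;> simp [h, mul_comm]
    calc (∑ k : Fin n, x (τ k) *
          ((∑ j ∈ Finset.univ.filter (fun j => j < k), y (τ j)) + y (τ k) / 2))
        = (∑ k : Fin n, x (τ k) * (∑ j ∈ Finset.univ.filter (fun j => j < k), y (τ j)))
          + ∑ k : Fin n, x (τ k) * (y (τ k) / 2) := by
          rw [← Finset.sum_add_distrib]; exact Finset.sum_congr rfl fun k _ => by ring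
      _ = _ := by rw [hdiag, hoff]
  rw [decomp σ, decomp σ₀]
  gcongr ?_ + _
  -- S σ ≤ ltsum of max (constant) = S σ₀
  have hle : Ltsum (fun j k => y (σ j) * x (σ k))
      ≤ Ltsum (fun a b => max (y (σ a) * x (σ b)) (y (σ b) * x (σ a))) := by
    unfold Ltsum
    refine Finset.sum_le_sum fun p _ => ?_
    by_cases h : p.1 < p.2
    · simp [h, le_max_left]
    · simp [h]
  have heq : Ltsum (fun a b => max (y (σ₀ a) * x (σ₀ b)) (y (σ₀ b) * x (σ₀ a)))
      = Ltsum (fun j k => y (σ₀ j) * x (σ₀ k)) := by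
    unfold Ltsum
    refine Finset.sum_congr rfl fun p _ => ?_
    by_cases h : p.1 < p.2
    · simp only [h, if_true]
      exact max_eq_left (hsort p.1 p.2 h.le)
    · simp [h]
  calc Ltsum (fun j k => y (σ j) * x (σ k))
      ≤ Ltsum (fun a b => max (y (σ a) * x (σ b)) (y (σ b) * x (σ a))) := hle
    _ = Ltsum (fun a b => max (y (σ₀ a) * x (σ₀ b)) (y (σ₀ b) * x (σ₀ a))) := by
        rw [ltsum_max_const x y σ, ltsum_max_const x y σ₀]
    _ = Ltsum (fun j k => y (σ₀ j) * x (σ₀ k)) := heq
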